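/- For n ≥ 2 and any prime p, the order of L_n modulo p equals p; i.e., L_n^p ≡ I_n (mod p), and no smaller positive power of L_n is congruent to the identity matrix modulo p. -/

import Mathlib

/-! `LmatMod p n` is the member `P 1` of the one-parameter family of Pascal matrices
`P a = (C(i, j) * a ^ (i - j))`. The identity `C(i, k) * C(k, j) = C(i, j) * C(i - j, k - j)`
and the binomial theorem give `P a * P b = P (a + b)`, hence `L ^ m = P m`. The `(1, 0)` entry
of `P a` is `a`, so `L ^ m = 1` exactly when `m = 0` in `ZMod p`, i.e. when `p ∣ m`. -/

/-- `L n` over `ZMod p`: the `n × n` matrix whose 1-based `(i,j)` entry is `C(i-1, j-1)`. -/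
def LmatMod (p n : ℕ) : Matrix (Fin n) (Fin n) (ZMod p) :=
  Matrix.of fun i j => (Nat.choose i.1 j.1 : ZMod p)

open Finset

variable {R : Type*} [CommRing R]

theorem sum_choose_mul_pow_mul_choose_mul_pow (i j : ℕ) (a b : R) :
    ∑ k ∈ range (i + 1), (i.choose k : R) * a ^ (i - k) * ((k.choose j : R) * b ^ (k - j)) =
      i.choose j * (a + b) ^ (i - j) := by
  rcases lt_or_ge i j with hij | hji
  · rw [Nat.choose_eq_zero_of_lt hij, Nat.cast_zero, zero_mul]
    refine sum_eq_zero fun k hk => ?_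
    rw [Nat.choose_eq_zero_of_lt (by grind : k < j)]
    simp
  · have hlow : ∑ k ∈ Ico 0 j,
        (i.choose k : R) * a ^ (i - k) * ((k.choose j : R) * b ^ (k - j)) = 0 :=
      sum_eq_zero fun k hk => by
        rw [Nat.choose_eq_zero_of_lt (mem_Ico.1 hk).2]
        simp
    rw [range_eq_Ico, ← sum_Ico_consecutive _ (Nat.zero_le j) (by omega : j ≤ i + 1), hlow,
      zero_add, sum_Ico_eq_sum_range, add_comm a b, add_pow, mul_sum,
      (by omega : i + 1 - j = i - j + 1)]
    refine sum_congr rfl fun t _ => ?_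
    have hchoose : (i.choose (j + t) : R) * (j + t).choose j = i.choose j * (i - j).choose t := by
      rw [← Nat.cast_mul, ← Nat.cast_mul, Nat.choose_mul (Nat.le_add_right j t),
        Nat.add_sub_cancel_left]
    rw [Nat.add_sub_cancel_left, Nat.sub_add_eq]
    linear_combination (a ^ (i - j - t) * b ^ t) * hchoose

-- For `i < j` the truncated exponent `i - j = 0` is harmless, since `C(i, j) = 0`.
def pascalMatrix (n : ℕ) (a : R) : Matrix (Fin n) (Fin n) R :=
  Matrix.of fun i j => (i.1.choose j.1 : R) * a ^ (i.1 - j.1)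

variable {n : ℕ}

theorem pascalMatrix_zero : pascalMatrix n (0 : R) = 1 := by
  ext i j
  rcases lt_trichotomy i j with h | rfl | h
  · simp [pascalMatrix, Nat.choose_eq_zero_of_lt (Fin.lt_def.1 h), Matrix.one_apply_ne h.ne]
  · simp [pascalMatrix]
  · simp [pascalMatrix, Matrix.one_apply_ne h.ne', Nat.sub_ne_zero_of_lt (Fin.lt_def.1 h)]

theorem pascalMatrix_mul (a b : R) :
    pascalMatrix n a * pascalMatrix n b = pascalMatrix n (a + b) := by
  ext i j
  simp only [Matrix.mul_apply, pascalMatrix, Matrix.of_apply]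
  rw [Fin.sum_univ_eq_sum_range
      (fun k => (i.1.choose k : R) * a ^ (i.1 - k) * ((k.choose j.1 : R) * b ^ (k - j.1))),
    ← sum_choose_mul_pow_mul_choose_mul_pow]
  refine (sum_subset (range_subset_range.2 i.2) fun k _ hk => ?_).symm
  rw [Nat.choose_eq_zero_of_lt (by simpa using hk)]
  simp

theorem pascalMatrix_pow (a : R) (m : ℕ) : pascalMatrix n a ^ m = pascalMatrix n (m * a) := by
  induction m with
  | zero => simp [pascalMatrix_zero]
  | succ m ih => rw [pow_succ, ih, pascalMatrix_mul, Nat.cast_succ, add_one_mul]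

theorem pascalMatrix_injective (hn : 2 ≤ n) : Function.Injective (pascalMatrix (R := R) n) :=
  fun a b h => by simpa [pascalMatrix] using congrFun (congrFun h ⟨1, hn⟩) ⟨0, by omega⟩

theorem LmatMod_eq_pascalMatrix (p : ℕ) : LmatMod p n = pascalMatrix n 1 := by
  ext i j
  simp [LmatMod, pascalMatrix]

theorem LmatMod_pow_eq_one_iff {p m : ℕ} (hn : 2 ≤ n) : LmatMod p n ^ m = 1 ↔ p ∣ m := by
  rw [LmatMod_eq_pascalMatrix, pascalMatrix_pow, mul_one, ← pascalMatrix_zero,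
    (pascalMatrix_injective hn).eq_iff, ZMod.natCast_eq_zero_iff]

theorem order_Lmat_mod (p n : ℕ) (hn : 2 ≤ n) :
    LmatMod p n ^ p = 1 ∧ ∀ m : ℕ, 0 < m → m < p → LmatMod p n ^ m ≠ 1 := by
  refine ⟨(LmatMod_pow_eq_one_iff hn).2 dvd_rfl, fun m hm hmp hpow => ?_⟩
  exact hmp.not_ge (Nat.le_of_dvd hm ((LmatMod_pow_eq_one_iff hn).1 hpow))
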